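/- Let G be a minimally nonperfectly divisible graph with a clique cutset X, and let V(G) \ X = V₁ ∪ V₂ with V₁, V₂ nonempty and anticomplete to each other; set G_i = G[X ∪ V_i] for i = 1,2. Then ω(G₁) = ω(G₂) = ω(G). -/
import Mathlib


open SimpleGraph

variable {V : Type}

/-- The clique number of the subgraph of `G` induced on `S`. -/
noncomputable def omegaOn (G : SimpleGraph V) (S : Set V) : ℕ :=
  sSup {n | ∃ s : Finset V, ↑s ⊆ S ∧ G.IsNClique n s}

/-- The subgraph of `G` induced on `S` is a perfect graph. -/
def IsPerfectOn (G : SimpleGraph V) (S : Set V) : Prop :=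
  ∀ T : Set V, T ⊆ S → (G.induce T).chromaticNumber = (omegaOn G T : ℕ∞)

/-- Every nonempty induced subgraph of `G[S]` admits a perfect division. -/
def PerfDivOn (G : SimpleGraph V) (S : Set V) : Prop :=
  ∀ H : Set V, H ⊆ S → H.Nonempty →
    ∃ A B : Set V, A ∪ B = H ∧ Disjoint A B ∧
      IsPerfectOn G A ∧ omegaOn G B < omegaOn G H

/-- `G` is minimally nonperfectly divisible. -/
def MNPD (G : SimpleGraph V) : Prop :=
  ¬ PerfDivOn G Set.univ ∧ ∀ S : Set V, S ≠ Set.univ → PerfDivOn G S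

/-- The external neighbourhood `N(X)`. -/
def extNbhd (G : SimpleGraph V) (X : Set V) : Set V :=
  {v | v ∉ X ∧ ∃ x ∈ X, G.Adj v x}

lemma omegaSet_nonempty (G : SimpleGraph V) (S : Set V) :
    {n | ∃ s : Finset V, ↑s ⊆ S ∧ G.IsNClique n s}.Nonempty :=
  ⟨0, ∅, by simp, by simp⟩

lemma omegaSet_bdd [Fintype V] (G : SimpleGraph V) (S : Set V) :
    BddAbove {n | ∃ s : Finset V, ↑s ⊆ S ∧ G.IsNClique n s} :=
  ⟨Fintype.card V, fun n ⟨s, _, hs⟩ => hs.2 ▸ s.card_le_univ⟩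

lemma le_omegaOn [Fintype V] {G : SimpleGraph V} {S : Set V} {n : ℕ} {s : Finset V}
    (hsub : ↑s ⊆ S) (hcl : G.IsNClique n s) : n ≤ omegaOn G S :=
  le_csSup (omegaSet_bdd G S) ⟨s, hsub, hcl⟩

lemma omegaOn_exists [Fintype V] (G : SimpleGraph V) (S : Set V) :
    ∃ s : Finset V, ↑s ⊆ S ∧ G.IsNClique (omegaOn G S) s :=
  Nat.sSup_mem (omegaSet_nonempty G S) (omegaSet_bdd G S)

lemma omegaOn_le [Fintype V] {G : SimpleGraph V} {S : Set V} {n : ℕ}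
    (h : ∀ s : Finset V, ↑s ⊆ S → G.IsClique ↑s → s.card ≤ n) : omegaOn G S ≤ n := by
  apply csSup_le (omegaSet_nonempty G S)
  rintro m ⟨s, hsub, hcl⟩
  exact hcl.2 ▸ h s hsub hcl.1

lemma omegaOn_mono [Fintype V] (G : SimpleGraph V) {S T : Set V} (h : S ⊆ T) :
    omegaOn G S ≤ omegaOn G T :=
  csSup_le_csSup (omegaSet_bdd G T) (omegaSet_nonempty G S)
    (fun _ ⟨s, hsub, hcl⟩ => ⟨s, hsub.trans h, hcl⟩)

/-- A clique inside `B ∪ V2` with `B ⊆ X ∪ V1` lies in `B` or in `X ∪ V2`. -/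
lemma clique_split {G : SimpleGraph V} {X V1 V2 B : Set V}
    (hd : Disjoint V1 V2)
    (hanti : ∀ a ∈ V1, ∀ b ∈ V2, ¬ G.Adj a b)
    (hB : B ⊆ X ∪ V1) (s : Finset V) (hcl : G.IsClique ↑s)
    (hsub : ↑s ⊆ B ∪ V2) : ↑s ⊆ B ∨ ↑s ⊆ X ∪ V2 := by
  by_cases hv2 : ∃ v ∈ s, v ∈ V2
  · right
    obtain ⟨v, hvs, hv⟩ := hv2
    intro w hws
    rcases hsub hws with hwB | hwV2
    · rcases hB hwB with hwX | hwV1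
      · exact Or.inl hwX
      · exfalso
        have hne : w ≠ v := fun h => hd.ne_of_mem hwV1 hv h
        exact hanti w hwV1 v hv (hcl hws hvs hne)
    · exact Or.inr hwV2
  · left
    intro w hws
    rcases hsub hws with hwB | hwV2
    · exact hwB
    · exact absurd ⟨w, hws, hwV2⟩ hv2

lemma main_half [Fintype V] (G : SimpleGraph V) (hG : MNPD G)
    (X V1 V2 : Set V)
    (hpart : V1 ∪ V2 = Set.univ \ X) (hd : Disjoint V1 V2)
    (h1 : V1.Nonempty) (h2 : V2.Nonempty)
    (hanti : ∀ a ∈ V1, ∀ b ∈ V2, ¬ G.Adj a b) :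
    omegaOn G (X ∪ V2) = omegaOn G Set.univ := by
  refine le_antisymm (omegaOn_mono G (Set.subset_univ _)) ?_
  by_contra hlt
  push_neg at hlt
  -- hlt : omegaOn G (X ∪ V2) < omegaOn G univ
  -- basic set facts
  have hdXV2 : Disjoint (X ∪ V1) V2 := by
    have hXV2 : Disjoint X V2 := by
      rw [Set.disjoint_left]
      intro a haX haV2
      have : a ∈ Set.univ \ X := hpart ▸ Set.mem_union_right _ haV2
      exact this.2 haX
    exact Set.disjoint_union_left.mpr ⟨hXV2, hd⟩
  have hne_univ : (X ∪ V1) ≠ Set.univ := by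
    obtain ⟨b, hb⟩ := h2
    intro h
    exact (Set.disjoint_left.mp hdXV2) (h ▸ Set.mem_univ b) hb
  -- split X ∪ V1
  obtain ⟨A, B, hAB, hdisj, hperf, homega⟩ :=
    hG.2 (X ∪ V1) hne_univ (X ∪ V1) le_rfl ⟨h1.choose, Set.mem_union_right _ h1.choose_spec⟩
  have hBsub : B ⊆ X ∪ V1 := hAB ▸ Set.subset_union_right
  have hAsub : A ⊆ X ∪ V1 := hAB ▸ Set.subset_union_left
  -- the set B ∪ V2 has small clique number
  have hB' : omegaOn G (B ∪ V2) < omegaOn G Set.univ := by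
    have hBlt : omegaOn G B < omegaOn G Set.univ :=
      lt_of_lt_of_le homega (omegaOn_mono G (Set.subset_univ _))
    obtain ⟨s, hsub, hcl⟩ := omegaOn_exists G (B ∪ V2)
    rcases clique_split hd hanti hBsub s hcl.1 hsub with h | h
    · exact lt_of_le_of_lt (le_omegaOn h hcl) hBlt
    · exact lt_of_le_of_lt (le_omegaOn h hcl) hlt
  -- G is perfectly divisible: contradiction
  apply hG.1
  intro H _ hHne
  by_cases hH : H = Set.univ
  · subst hH
    refine ⟨A, B ∪ V2, ?_, ?_, hperf, hB'⟩
    · rw [← Set.union_assoc, hAB]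
      apply Set.eq_univ_of_univ_subset
      intro v _
      by_cases hvX : v ∈ X
      · exact Set.mem_union_left _ (Set.mem_union_left _ hvX)
      · have : v ∈ V1 ∪ V2 := hpart ▸ ⟨Set.mem_univ v, hvX⟩
        rcases this with h | h
        · exact Set.mem_union_left _ (Set.mem_union_right _ h)
        · exact Set.mem_union_right _ h
    · exact Set.disjoint_union_right.mpr ⟨hdisj, (hdXV2.mono_left hAsub)⟩
  · exact hG.2 H hH H le_rfl hHne

theorem stmt_11 [Fintype V] (G : SimpleGraph V) (hG : MNPD G) (hc : G.Connected)
    (X V1 V2 : Set V) (hX : G.IsClique X)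
    (hpart : V1 ∪ V2 = Set.univ \ X) (hd : Disjoint V1 V2)
    (h1 : V1.Nonempty) (h2 : V2.Nonempty)
    (hanti : ∀ a ∈ V1, ∀ b ∈ V2, ¬ G.Adj a b) :
    omegaOn G (X ∪ V1) = omegaOn G Set.univ ∧
    omegaOn G (X ∪ V2) = omegaOn G Set.univ := by
  constructor
  · exact main_half G hG X V2 V1 (by rw [Set.union_comm]; exact hpart) hd.symm h2 h1
      (fun a ha b hb hadj => hanti b hb a ha hadj.symm)
  · exact main_half G hG X V1 V2 hpart hd h1 h2 hanti
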